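/- arXiv:1602.04426 — 10 statements merged into one kernel-verified Lean document; each statement's English description precedes it below -/
import Mathlib

section
/- Let A be a symmetric n×n matrix and X = QQᵀ with Q ∈ ℝ^{n×2} having unit-norm rows. If ddiag(AX) − A∘X ⪰ 0 (the second-order optimality condition), then for the planted vector z ∈ {±1}ⁿ, ⟨A, X⟩ ≥ ⟨A, X ∘ X ∘ (zzᵀ)⟩. -/
open Matrix BigOperators

noncomputable def ddiag {n : ℕ} (A : Matrix (Fin n) (Fin n) ℝ) : Matrix (Fin n) (Fin n) ℝ :=
  Matrix.diagonal (fun i => A i i)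

noncomputable def opNorm {n : ℕ} (M : Matrix (Fin n) (Fin n) ℝ) : ℝ :=
  ‖(Matrix.toEuclideanLin M).toContinuousLinearMap‖

noncomputable def minner {n : ℕ} (A B : Matrix (Fin n) (Fin n) ℝ) : ℝ :=
  ∑ i, ∑ j, A i j * B i j

/-!
Pair the positive semidefinite matrix `ddiag (A X) - A ∘ X` with `P = X ∘ z zᵀ`, which is positive
semidefinite by the Schur product theorem, so that `0 ≤ ⟨ddiag (A X) - A ∘ X, P⟩`. Since `P` has
unit diagonal, `⟨ddiag (A X), P⟩ = tr (A X) = ⟨A, X⟩`, while `⟨A ∘ X, P⟩ = ⟨A, X ∘ X ∘ z zᵀ⟩`.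
-/

theorem Matrix.PosSemidef.hadamard_vecMulVec_self {ι : Type*} [Fintype ι] {X : Matrix ι ι ℝ}
    (hX : X.PosSemidef) (z : ι → ℝ) : (X ⊙ vecMulVec z z).PosSemidef :=
  hX.hadamard (by simpa using posSemidef_vecMulVec_self_star z)

section
variable {n : ℕ}

theorem minner_sub_left (M N P : Matrix (Fin n) (Fin n) ℝ) :
    minner (M - N) P = minner M P - minner N P := by
  simp only [minner, Matrix.sub_apply, sub_mul, Finset.sum_sub_distrib]

theorem minner_hadamard_left (A X P : Matrix (Fin n) (Fin n) ℝ) :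
    minner (A ⊙ X) P = minner A (X ⊙ P) := by
  simp only [minner, hadamard_apply, mul_assoc]

theorem minner_ddiag_left_of_diag_eq_one (B : Matrix (Fin n) (Fin n) ℝ)
    {P : Matrix (Fin n) (Fin n) ℝ} (hP : ∀ i, P i i = 1) : minner (ddiag B) P = B.trace := by
  simp [minner, ddiag, diagonal_apply, hP, trace]

theorem trace_mul_eq_minner_of_isSymm (A : Matrix (Fin n) (Fin n) ℝ)
    {X : Matrix (Fin n) (Fin n) ℝ} (hX : X.IsSymm) : (A * X).trace = minner A X := by
  simp only [trace, diag_apply, mul_apply, minner]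
  simp_rw [hX.apply]

/-- `minner M P` is the quadratic form of the Schur product `M ⊙ P` at the all-ones vector. -/
theorem minner_nonneg_of_posSemidef {M P : Matrix (Fin n) (Fin n) ℝ}
    (hM : M.PosSemidef) (hP : P.PosSemidef) : 0 ≤ minner M P := by
  simpa [minner, dotProduct, mulVec, hadamard_apply] using
    (hM.hadamard hP).dotProduct_mulVec_nonneg 1

theorem minner_hadamard_hadamard_vecMulVec_le {A X : Matrix (Fin n) (Fin n) ℝ}
    (hX : X.PosSemidef) (hXdiag : ∀ i, X i i = 1) {z : Fin n → ℝ} (hz : ∀ i, z i * z i = 1)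
    (hso : (ddiag (A * X) - A ⊙ X).PosSemidef) :
    minner A (X ⊙ (X ⊙ vecMulVec z z)) ≤ minner A X := by
  have hPdiag : ∀ i, (X ⊙ vecMulVec z z) i i = 1 := fun i => by
    simp [hXdiag, vecMulVec_apply, hz]
  have h := minner_nonneg_of_posSemidef hso (hX.hadamard_vecMulVec_self z)
  rw [minner_sub_left, minner_ddiag_left_of_diag_eq_one _ hPdiag, minner_hadamard_left,
    trace_mul_eq_minner_of_isSymm A (by simpa using hX.isHermitian)] at h
  linarith

end

theorem stmt3_general {n : ℕ} (A : Matrix (Fin n) (Fin n) ℝ)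
    (Q : Matrix (Fin n) (Fin 2) ℝ) (hrows : ∀ i, (Q i 0) ^ 2 + (Q i 1) ^ 2 = 1)
    (z : Fin n → ℝ) (hz : ∀ i, z i = 1 ∨ z i = -1)
    (X : Matrix (Fin n) (Fin n) ℝ) (hXdef : X = Q * Qᵀ)
    (hso : (ddiag (A * X) - A.hadamard X).PosSemidef) :
    minner A (X.hadamard (X.hadamard (vecMulVec z z))) ≤ minner A X := by
  subst hXdef
  have hX : (Q * Qᵀ).PosSemidef := by simpa using posSemidef_self_mul_conjTranspose Q
  have hXdiag : ∀ i, (Q * Qᵀ) i i = 1 := fun i => by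
    simpa [mul_apply, Fin.sum_univ_two, sq] using hrows i
  have hz2 : ∀ i, z i * z i = 1 := fun i => by
    rcases hz i with h | h <;> simp [h]
  exact minner_hadamard_hadamard_vecMulVec_le hX hXdiag hz2 hso

/-- Second-order condition implies ⟨A, X⟩ ≥ ⟨A, X∘X∘zzᵀ⟩. -/
theorem stmt3 {n : ℕ} (A : Matrix (Fin n) (Fin n) ℝ) (hA : A.IsSymm)
    (Q : Matrix (Fin n) (Fin 2) ℝ) (hrows : ∀ i, (Q i 0) ^ 2 + (Q i 1) ^ 2 = 1)
    (z : Fin n → ℝ) (hz : ∀ i, z i = 1 ∨ z i = -1)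
    (X : Matrix (Fin n) (Fin n) ℝ) (hXdef : X = Q * Qᵀ)
    (hso : (ddiag (A * X) - A.hadamard X).PosSemidef) :
    minner A (X.hadamard (X.hadamard (vecMulVec z z))) ≤ minner A X :=
  stmt3_general A Q hrows z hz X hXdef hso
end

section
/- Let A be a symmetric n×n matrix and q ∈ {±1}ⁿ. Set Q = [q, 0] ∈ ℝ^{n×2} and X = QQᵀ = qqᵀ. If the second-order condition ddiag(AX) − A∘X ⪰ 0 holds, then the matrix S = ddiag(AX) − A is positive semidefinite. -/
/-!
With `D = diagonal q` we have `D * D = 1` and `A ⊙ qqᵀ = D * A * D`, and `D` commutes with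
diagonal matrices; hence `ddiag (A X) - A = D * (ddiag (A X) - A ⊙ X) * D` is a congruence
of the positive semidefinite second-order matrix.
-/

open Matrix BigOperators

namespace Matrix

variable {n α : Type*} [Fintype n] [DecidableEq n]

theorem hadamard_vecMulVec [CommSemiring α] (A : Matrix n n α) (v w : n → α) :
    A ⊙ vecMulVec v w = diagonal v * A * diagonal w := by
  ext i j
  simp only [hadamard_apply, vecMulVec_apply, mul_diagonal, diagonal_mul]
  ring

theorem diagonal_mul_sub_hadamard_vecMulVec_mul_diagonal [CommRing α] (A : Matrix n n α)
    (d q : n → α) (hq : ∀ i, q i * q i = 1) :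
    diagonal q * (diagonal d - A ⊙ vecMulVec q q) * diagonal q = diagonal d - A := by
  have hqq : diagonal q * diagonal q = 1 := by
    rw [diagonal_mul_diagonal, ← diagonal_one]
    exact congrArg diagonal (funext hq)
  have hcomm : diagonal q * diagonal d = diagonal d * diagonal q := by
    simp only [diagonal_mul_diagonal, mul_comm]
  rw [hadamard_vecMulVec, mul_sub, sub_mul, hcomm, Matrix.mul_assoc, hqq, Matrix.mul_one,
    ← Matrix.mul_assoc, ← Matrix.mul_assoc, hqq, Matrix.one_mul, Matrix.mul_assoc, hqq,
    Matrix.mul_one]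

end Matrix

theorem stmt6_general {n : ℕ} (A : Matrix (Fin n) (Fin n) ℝ)
    (q : Fin n → ℝ) (hq : ∀ i, q i = 1 ∨ q i = -1)
    (X : Matrix (Fin n) (Fin n) ℝ) (hXdef : X = vecMulVec q q)
    (hso : (ddiag (A * X) - A.hadamard X).PosSemidef) :
    (ddiag (A * X) - A).PosSemidef := by
  have hq_sq : ∀ i, q i * q i = 1 := fun i => by rcases hq i with h | h <;> simp [h]
  subst hXdef
  have h := hso.conjTranspose_mul_mul_same (diagonal q)
  rwa [diagonal_conjTranspose, star_trivial, ddiag,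
    diagonal_mul_sub_hadamard_vecMulVec_mul_diagonal A _ q hq_sq] at h

/-- At a rank-one point X = qqᵀ, the second-order condition implies S = ddiag(AX) − A ⪰ 0. -/
theorem stmt6 {n : ℕ} (A : Matrix (Fin n) (Fin n) ℝ) (hA : A.IsSymm)
    (q : Fin n → ℝ) (hq : ∀ i, q i = 1 ∨ q i = -1)
    (X : Matrix (Fin n) (Fin n) ℝ) (hXdef : X = vecMulVec q q)
    (hso : (ddiag (A * X) - A.hadamard X).PosSemidef) :
    (ddiag (A * X) - A).PosSemidef :=
  stmt6_general A q hq X hXdef hso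
end

section
/- Let A be a symmetric n×n matrix and Q ∈ ℝ^{n×2} with unit-norm rows. If S = ddiag(AQQᵀ) − A is positive semidefinite, then Q is a global maximizer of Tr(Q̃ᵀAQ̃) over all Q̃ ∈ ℝ^{n×2} with unit-norm rows. -/
open Matrix BigOperators

/-! `S = ddiag(AQQᵀ) - A` is a dual certificate. For every feasible `Q'`,
`0 ≤ Tr(Q'ᵀ S Q')`, and since the rows of `Q'` are unit vectors, `Tr(Q'ᵀ ddiag(M) Q') = Tr M`
for every `M`; with `M = AQQᵀ` this reads `0 ≤ Tr(QᵀAQ) - Tr(Q'ᵀAQ')`. -/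

theorem Matrix.trace_transpose_mul_diagonal_mul {m k R : Type*} [Fintype m] [Fintype k]
    [DecidableEq m] [CommSemiring R] (d : m → R) (Q : Matrix m k R) :
    trace (Qᵀ * diagonal d * Q) = ∑ i, d i * ∑ j, Q i j ^ 2 := by
  simp only [trace, diag, mul_apply, transpose_apply, diagonal_apply, mul_ite, mul_zero,
    Finset.sum_ite_eq', Finset.mem_univ, if_true, Finset.mul_sum]
  rw [Finset.sum_comm]
  exact Finset.sum_congr rfl fun i _ => Finset.sum_congr rfl fun j _ => by ring

theorem trace_transpose_mul_ddiag_mul_of_unit_rows {n : ℕ} {k : Type*} [Fintype k]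
    (M : Matrix (Fin n) (Fin n) ℝ) {Q : Matrix (Fin n) k ℝ} (hQ : ∀ i, ∑ j, Q i j ^ 2 = 1) :
    trace (Qᵀ * ddiag M * Q) = trace M := by
  simp only [ddiag, trace_transpose_mul_diagonal_mul, hQ, mul_one]
  rfl

theorem stmt7_general {n : ℕ} (A : Matrix (Fin n) (Fin n) ℝ)
    (Q : Matrix (Fin n) (Fin 2) ℝ)
    (hS : (ddiag (A * Q * Qᵀ) - A).PosSemidef) :
    ∀ Q' : Matrix (Fin n) (Fin 2) ℝ, (∀ i, (Q' i 0) ^ 2 + (Q' i 1) ^ 2 = 1) →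
      Matrix.trace (Q'ᵀ * A * Q') ≤ Matrix.trace (Qᵀ * A * Q) := by
  intro Q' hQ'
  have hunit : ∀ i, ∑ j, Q' i j ^ 2 = 1 := by simpa only [Fin.sum_univ_two] using hQ'
  have hcert := (hS.conjTranspose_mul_mul_same Q').trace_nonneg
  rw [conjTranspose_eq_transpose_of_trivial, Matrix.mul_sub, Matrix.sub_mul, trace_sub,
    trace_transpose_mul_ddiag_mul_of_unit_rows _ hunit, trace_mul_cycle A Q Qᵀ] at hcert
  linarith

/-- If S = ddiag(AQQᵀ) − A ⪰ 0 then Q is a global maximizer. -/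
theorem stmt7 {n : ℕ} (A : Matrix (Fin n) (Fin n) ℝ) (hA : A.IsSymm)
    (Q : Matrix (Fin n) (Fin 2) ℝ) (hrows : ∀ i, (Q i 0) ^ 2 + (Q i 1) ^ 2 = 1)
    (hS : (ddiag (A * Q * Qᵀ) - A).PosSemidef) :
    ∀ Q' : Matrix (Fin n) (Fin 2) ℝ, (∀ i, (Q' i 0) ^ 2 + (Q' i 1) ^ 2 = 1) →
      Matrix.trace (Q'ᵀ * A * Q') ≤ Matrix.trace (Qᵀ * A * Q) :=
  stmt7_general A Q hS
end

section
/- Let z ∈ {±1}ⁿ and A = zzᵀ + σΔ with Δ symmetric, diag(Δ) = 0, ‖Δ‖ ≤ γ√n, ‖Δz‖_∞ ≤ γ√(n log n), and σ = c√n. If γc < 1/(1 + √(log n)), then S = ddiag(Azzᵀ) − A is positive semidefinite with kernel exactly span(z), i.e., Sz = 0 and uᵀSu > 0 for all nonzero u orthogonal to z. -/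
open Matrix BigOperators

/-!
Write `S = diag(d) - A` with `dᵢ = (Az)ᵢ zᵢ`. Since `zᵢ² = 1`, `(Sz)ᵢ = dᵢ zᵢ - (Az)ᵢ = 0`.
For `u ⊥ z` the rank-one part of `A` is invisible, so
`uᵀSu = ∑ dᵢ uᵢ² - σ uᵀΔu` with `dᵢ = n + σ zᵢ(Δz)ᵢ ≥ n - σγ√(n log n)` and
`uᵀΔu ≤ γ√n ‖u‖²`; with `σ = c√n` this gives `uᵀSu ≥ n(1 - γc(1 + √log n))‖u‖² > 0`.
Positive semidefiniteness follows because `S` is symmetric with `Sz = 0`, so the quadratic form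
only sees the component of a vector orthogonal to `z`.
-/

theorem dotProduct_mulVec_self_le_opNorm {n : ℕ} (M : Matrix (Fin n) (Fin n) ℝ) (v : Fin n → ℝ) :
    v ⬝ᵥ M *ᵥ v ≤ opNorm M * (v ⬝ᵥ v) := by
  let w : EuclideanSpace ℝ (Fin n) := WithLp.toLp 2 v
  let T := (toEuclideanLin M).toContinuousLinearMap
  have h_inner : v ⬝ᵥ M *ᵥ v = inner ℝ w (T w) := by
    simp [w, T, EuclideanSpace.inner_eq_star_dotProduct, dotProduct_comm]
  have h_norm : v ⬝ᵥ v = ‖w‖ ^ 2 := by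
    rw [← real_inner_self_eq_norm_sq, EuclideanSpace.inner_eq_star_dotProduct]
    simp [w]
  calc v ⬝ᵥ M *ᵥ v = inner ℝ w (T w) := h_inner
    _ ≤ ‖w‖ * ‖T w‖ := real_inner_le_norm w (T w)
    _ ≤ ‖w‖ * (‖T‖ * ‖w‖) := by gcongr; exact T.le_opNorm w
    _ = opNorm M * (v ⬝ᵥ v) := by rw [h_norm, opNorm]; ring

theorem ddiag_mul_vecMulVec {n : ℕ} (A : Matrix (Fin n) (Fin n) ℝ) (z w : Fin n → ℝ) :
    ddiag (A * vecMulVec z w) = diagonal fun i => (A *ᵥ z) i * w i := by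
  simp only [ddiag, mul_vecMulVec, vecMulVec_apply]

section Certificate

variable {ι : Type*} [Fintype ι]

theorem dotProduct_self_eq_card_of_mul_self_eq_one {R : Type*} [Semiring R] {z : ι → R}
    (hz : ∀ i, z i * z i = 1) :
    z ⬝ᵥ z = Fintype.card ι := by
  simp [dotProduct, hz]

theorem dotProduct_mulVec_add_smul_of_mulVec_eq_zero {R : Type*} [CommRing R]
    {S : Matrix ι ι R} (hS : S.IsSymm) {z : ι → R} (hSz : S *ᵥ z = 0) (u : ι → R) (a : R) :
    (u + a • z) ⬝ᵥ S *ᵥ (u + a • z) = u ⬝ᵥ S *ᵥ u := by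
  have h_zSu : z ⬝ᵥ S *ᵥ u = 0 := by
    rw [dotProduct_mulVec, ← mulVec_transpose, hS.eq, dotProduct_comm, hSz, dotProduct_zero]
  simp [mulVec_add, mulVec_smul, hSz, add_dotProduct, h_zSu]

theorem posSemidef_of_mulVec_eq_zero {S : Matrix ι ι ℝ} (hS : S.IsSymm) {z : ι → ℝ}
    (hSz : S *ᵥ z = 0) (hpos : ∀ u, u ⬝ᵥ z = 0 → 0 ≤ u ⬝ᵥ S *ᵥ u) : S.PosSemidef := by
  refine posSemidef_iff_dotProduct_mulVec.2 ⟨hS, fun x => ?_⟩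
  rw [star_trivial]
  by_cases hz : z ⬝ᵥ z = 0
  · obtain rfl := dotProduct_self_eq_zero.1 hz
    exact hpos x (dotProduct_zero x)
  set a := (x ⬝ᵥ z) / (z ⬝ᵥ z)
  have h_orth : (x - a • z) ⬝ᵥ z = 0 := by
    rw [sub_dotProduct, smul_dotProduct, smul_eq_mul, div_mul_cancel₀ _ hz, sub_self]
  have h_split := dotProduct_mulVec_add_smul_of_mulVec_eq_zero hS hSz (x - a • z) a
  rw [sub_add_cancel] at h_split
  exact h_split ▸ hpos _ h_orth

variable [DecidableEq ι]

theorem diagonal_sub_mulVec_eq_zero {R : Type*} [CommRing R] {z : ι → R}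
    (hz : ∀ i, z i * z i = 1) (A : Matrix ι ι R) : (diagonal (fun i => (A *ᵥ z) i * z i) - A) *ᵥ z = 0 := by
  ext i
  simp [sub_mulVec, mulVec_diagonal, mul_assoc, hz]

theorem dotProduct_diagonal_sub_mulVec {R : Type*} [CommRing R] (d : ι → R) (A : Matrix ι ι R)
    (u : ι → R) :
    u ⬝ᵥ (diagonal d - A) *ᵥ u = ∑ i, d i * u i ^ 2 - u ⬝ᵥ A *ᵥ u := by
  rw [sub_mulVec, dotProduct_sub]
  congr 1
  simp only [dotProduct, mulVec_diagonal]
  exact Finset.sum_congr rfl fun i _ => by ring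

theorem mul_dotProduct_self_le_dotProduct_diagonal_sub_mulVec {d : ι → ℝ} {m M : ℝ}
    (hd : ∀ i, m ≤ d i) {A : Matrix ι ι ℝ} {u : ι → ℝ} (hA : u ⬝ᵥ A *ᵥ u ≤ M * (u ⬝ᵥ u)) :
    (m - M) * (u ⬝ᵥ u) ≤ u ⬝ᵥ (diagonal d - A) *ᵥ u := by
  have h_diag : m * (u ⬝ᵥ u) ≤ ∑ i, d i * u i ^ 2 := by
    rw [dotProduct, Finset.mul_sum]
    exact Finset.sum_le_sum fun i _ => by nlinarith [hd i, sq_nonneg (u i)]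
  rw [dotProduct_diagonal_sub_mulVec]
  linarith

end Certificate

theorem mul_dotProduct_self_le_dotProduct_spiked_certificate {n : ℕ} {z : Fin n → ℝ}
    (hz : ∀ i, z i * z i = 1) {Δ : Matrix (Fin n) (Fin n) ℝ} {σ β b : ℝ} (hσ : 0 ≤ σ)
    (hΔop : opNorm Δ ≤ β) (hΔz : ∀ i, |(Δ *ᵥ z) i| ≤ b) {u : Fin n → ℝ} (hu : u ⬝ᵥ z = 0) :
    let A := vecMulVec z z + σ • Δ
    (n - σ * b - σ * β) * (u ⬝ᵥ u) ≤ u ⬝ᵥ (diagonal (fun i => (A *ᵥ z) i * z i) - A) *ᵥ u := by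
  intro A
  have hd : ∀ i, n - σ * b ≤ (A *ᵥ z) i * z i := by
    intro i
    have h_entry : (A *ᵥ z) i * z i = n + σ * ((Δ *ᵥ z) i * z i) := by
      simp [A, add_mulVec, vecMulVec_mulVec, smul_mulVec,
        dotProduct_self_eq_card_of_mul_self_eq_one hz, add_mul, mul_assoc]
      linear_combination (n : ℝ) * hz i
    have h_abs : |(Δ *ᵥ z) i * z i| = |(Δ *ᵥ z) i| := by
      rcases mul_self_eq_one_iff.1 (hz i) with h | h <;> simp [h]
    rw [h_entry]
    nlinarith [neg_abs_le ((Δ *ᵥ z) i * z i), mul_le_mul_of_nonneg_left (h_abs ▸ hΔz i) hσ]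
  have hA : u ⬝ᵥ A *ᵥ u ≤ σ * β * (u ⬝ᵥ u) := by
    have h_quad : u ⬝ᵥ A *ᵥ u = σ * (u ⬝ᵥ Δ *ᵥ u) := by
      simp [A, add_mulVec, vecMulVec_mulVec, smul_mulVec, dotProduct_comm z u, hu]
    have h_uu : 0 ≤ u ⬝ᵥ u := by simpa using dotProduct_self_star_nonneg u
    rw [h_quad, mul_assoc]
    gcongr
    exact (dotProduct_mulVec_self_le_opNorm Δ u).trans (by gcongr)
  exact mul_dotProduct_self_le_dotProduct_diagonal_sub_mulVec hd hA

theorem stmt8_general {n : ℕ} (z : Fin n → ℝ) (hz : ∀ i, z i = 1 ∨ z i = -1)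
    (Δ A S : Matrix (Fin n) (Fin n) ℝ) (hΔs : Δ.IsSymm)
    (σ c γ : ℝ) (hc : 0 ≤ c) (hσ : σ = c * Real.sqrt n)
    (hΔop : opNorm Δ ≤ γ * Real.sqrt n)
    (hΔz : ∀ i, |Δ.mulVec z i| ≤ γ * Real.sqrt (n * Real.log n))
    (hAdef : A = vecMulVec z z + σ • Δ)
    (hSdef : S = ddiag (A * vecMulVec z z) - A)
    (hgc : γ * c < 1 / (1 + Real.sqrt (Real.log n))) :
    S.PosSemidef ∧ S.mulVec z = 0 ∧
      ∀ u : Fin n → ℝ, u ≠ 0 → (∑ i, u i * z i = 0) → 0 < u ⬝ᵥ S.mulVec u := by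
  have hz2 : ∀ i, z i * z i = 1 := fun i => by rcases hz i with h | h <;> simp [h]
  have hσ0 : 0 ≤ σ := hσ ▸ by positivity
  set κ := 1 - γ * c * (1 + Real.sqrt (Real.log n))
  have hκ : 0 < κ := by
    rw [lt_div_iff₀ (by positivity)] at hgc
    linarith
  rw [ddiag_mul_vecMulVec] at hSdef
  have hSz : S *ᵥ z = 0 := hSdef ▸ diagonal_sub_mulVec_eq_zero hz2 A
  have hS : S.IsSymm := hSdef ▸ (isSymm_diagonal _).sub
    (hAdef ▸ IsSymm.add (transpose_vecMulVec z z) (hΔs.smul σ))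
  have h_coercive : ∀ u, u ⬝ᵥ z = 0 → n * κ * (u ⬝ᵥ u) ≤ u ⬝ᵥ S *ᵥ u := by
    intro u hu
    have h_coef : n * κ = n - σ * (γ * Real.sqrt (n * Real.log n)) - σ * (γ * Real.sqrt n) := by
      rw [hσ, Real.sqrt_mul (Nat.cast_nonneg n)]
      linear_combination (c * γ * (1 + Real.sqrt (Real.log n))) *
        Real.mul_self_sqrt (Nat.cast_nonneg (α := ℝ) n)
    rw [h_coef, hSdef, hAdef]
    exact mul_dotProduct_self_le_dotProduct_spiked_certificate hz2 hσ0 hΔop hΔz hu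
  refine ⟨posSemidef_of_mulVec_eq_zero hS hSz fun u hu => ?_, hSz, fun u hu0 hu => ?_⟩
  · exact le_trans (mul_nonneg (by positivity) (by simpa using dotProduct_self_star_nonneg u))
      (h_coercive u hu)
  · obtain ⟨i, -⟩ := Function.ne_iff.1 hu0
    have hn : (0 : ℝ) < n := Nat.cast_pos.2 i.pos
    have hu_pos : 0 < u ⬝ᵥ u := by simpa using dotProduct_self_star_pos_iff.2 hu0
    exact lt_of_lt_of_le (by positivity) (h_coercive u hu)

/-- In the low-noise regime, S = ddiag(Azzᵀ) − A is PSD with kernel exactly span(z). -/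
theorem stmt8 {n : ℕ} (z : Fin n → ℝ) (hz : ∀ i, z i = 1 ∨ z i = -1)
    (Δ A S : Matrix (Fin n) (Fin n) ℝ) (hΔs : Δ.IsSymm) (hΔd : ∀ i, Δ i i = 0)
    (σ c γ : ℝ) (hc : 0 ≤ c) (hγ : 0 ≤ γ) (hσ : σ = c * Real.sqrt n)
    (hΔop : opNorm Δ ≤ γ * Real.sqrt n)
    (hΔz : ∀ i, |Δ.mulVec z i| ≤ γ * Real.sqrt (n * Real.log n))
    (hAdef : A = vecMulVec z z + σ • Δ)
    (hSdef : S = ddiag (A * vecMulVec z z) - A)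
    (hgc : γ * c < 1 / (1 + Real.sqrt (Real.log n))) :
    S.PosSemidef ∧ S.mulVec z = 0 ∧
      ∀ u : Fin n → ℝ, u ≠ 0 → (∑ i, u i * z i = 0) → 0 < u ⬝ᵥ S.mulVec u :=
  stmt8_general z hz Δ A S hΔs σ c γ hc hσ hΔop hΔz hAdef hSdef hgc
end

section
/- Let z ∈ {±1}ⁿ and suppose S = ddiag(Azzᵀ) − A is positive semidefinite with kernel exactly span(z). Then zzᵀ is the unique maximizer of Tr(AX) over symmetric PSD matrices X with unit diagonal. -/
open Matrix BigOperators

/-!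
For `X` with unit diagonal, `Tr(ddiag(A zzᵀ) X) = Tr(A zzᵀ)`, so the optimality gap
`Tr(A zzᵀ) - Tr(A X)` equals `Tr(S X)`. Writing `S = BᴴB` and `X = CᴴC`, this trace is the squared
Frobenius norm of `BCᴴ`: it is nonnegative, and it vanishes only if `SX = 0`. Then every column of
`X` lies in `ker S = span z`, and the unit diagonal together with `zᵢ² = 1` forces `X = zzᵀ`.
-/

namespace Matrix

variable {n 𝕜 : Type*} [Fintype n] [RCLike 𝕜]

open scoped ComplexOrder MatrixOrder

theorem trace_conjTranspose_mul_self_mul_conjTranspose_mul_self (B C : Matrix n n 𝕜) :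
    (Bᴴ * B * (Cᴴ * C)).trace = (B * Cᴴ * (B * Cᴴ)ᴴ).trace := by
  rw [conjTranspose_mul, conjTranspose_conjTranspose, ← trace_mul_cycle]
  simp only [Matrix.mul_assoc]

theorem PosSemidef.trace_mul_nonneg {S X : Matrix n n 𝕜} (hS : S.PosSemidef)
    (hX : X.PosSemidef) : 0 ≤ (S * X).trace := by
  classical
  obtain ⟨B, rfl⟩ := CStarAlgebra.nonneg_iff_eq_star_mul_self.mp hS.nonneg
  obtain ⟨C, rfl⟩ := CStarAlgebra.nonneg_iff_eq_star_mul_self.mp hX.nonneg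
  rw [star_eq_conjTranspose, star_eq_conjTranspose,
    trace_conjTranspose_mul_self_mul_conjTranspose_mul_self]
  exact (posSemidef_self_mul_conjTranspose _).trace_nonneg

theorem PosSemidef.trace_mul_eq_zero_iff {S X : Matrix n n 𝕜} (hS : S.PosSemidef)
    (hX : X.PosSemidef) : (S * X).trace = 0 ↔ S * X = 0 := by
  refine ⟨fun h => ?_, fun h => by rw [h, trace_zero]⟩
  classical
  obtain ⟨B, rfl⟩ := CStarAlgebra.nonneg_iff_eq_star_mul_self.mp hS.nonneg
  obtain ⟨C, rfl⟩ := CStarAlgebra.nonneg_iff_eq_star_mul_self.mp hX.nonneg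
  rw [star_eq_conjTranspose, star_eq_conjTranspose,
    trace_conjTranspose_mul_self_mul_conjTranspose_mul_self,
    trace_mul_conjTranspose_self_eq_zero_iff] at h
  rw [star_eq_conjTranspose, star_eq_conjTranspose, Matrix.mul_assoc, ← Matrix.mul_assoc B,
    h, Matrix.zero_mul, Matrix.mul_zero]

theorem eq_vecMulVec_of_mul_eq_zero {K : Type*} [Field K]
    {S X : Matrix n n K} {z : n → K} (hker : ∀ u, S *ᵥ u = 0 → ∃ t : K, u = t • z)
    (hz : ∀ i, z i * z i = 1) (hX : ∀ i, X i i = 1) (hSX : S * X = 0) :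
    X = vecMulVec z z := by
  have hcol : ∀ j, S *ᵥ (fun i => X i j) = 0 := fun j => funext fun i => by
    simpa [mulVec, mul_apply, dotProduct] using congrFun₂ hSX i j
  choose t ht using fun j => hker _ (hcol j)
  have hXt : ∀ i j, X i j = t j * z i := fun i j => by simpa using congrFun (ht j) i
  have htz : ∀ j, t j = z j := fun j => by
    have h := hXt j j
    rw [hX j] at h
    calc t j = t j * (z j * z j) := by rw [hz j, mul_one]
      _ = z j := by rw [← mul_assoc, ← h, one_mul]
  ext i j
  rw [hXt, htz, vecMulVec_apply, mul_comm]

end Matrix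

theorem trace_ddiag_mul {n : ℕ} (M X : Matrix (Fin n) (Fin n) ℝ) (hX : ∀ i, X i i = 1) :
    (ddiag M * X).trace = M.trace := by
  simp [ddiag, trace, diagonal_mul, hX]

theorem stmt9_general {n : ℕ} (A : Matrix (Fin n) (Fin n) ℝ)
    (z : Fin n → ℝ) (hz : ∀ i, z i = 1 ∨ z i = -1)
    (S : Matrix (Fin n) (Fin n) ℝ) (hSdef : S = ddiag (A * vecMulVec z z) - A)
    (hpsd : S.PosSemidef)
    (hker : ∀ u : Fin n → ℝ, S.mulVec u = 0 → ∃ t : ℝ, u = t • z) :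
    (∀ X : Matrix (Fin n) (Fin n) ℝ, X.PosSemidef → (∀ i, X i i = 1) →
      Matrix.trace (A * X) ≤ Matrix.trace (A * vecMulVec z z)) ∧
    (∀ X : Matrix (Fin n) (Fin n) ℝ, X.PosSemidef → (∀ i, X i i = 1) →
      Matrix.trace (A * X) = Matrix.trace (A * vecMulVec z z) → X = vecMulVec z z) := by
  have hgap : ∀ X : Matrix (Fin n) (Fin n) ℝ, (∀ i, X i i = 1) →
      (S * X).trace = (A * vecMulVec z z).trace - (A * X).trace := fun X hX => by
    rw [hSdef, sub_mul, trace_sub, trace_ddiag_mul _ _ hX]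
  have hzz : ∀ i, z i * z i = 1 := fun i => by rcases hz i with h | h <;> simp [h]
  refine ⟨fun X hX hX1 => ?_, fun X hX hX1 hopt => ?_⟩
  · linarith [hgap X hX1, hpsd.trace_mul_nonneg hX]
  · refine eq_vecMulVec_of_mul_eq_zero hker hzz hX1 ((hpsd.trace_mul_eq_zero_iff hX).mp ?_)
    rw [hgap X hX1, hopt, sub_self]

/-- If S = ddiag(Azzᵀ) − A is PSD with kernel exactly span(z), then zzᵀ is the unique
maximizer of Tr(AX) over PSD matrices with unit diagonal. -/
theorem stmt9 {n : ℕ} (A : Matrix (Fin n) (Fin n) ℝ) (hA : A.IsSymm)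
    (z : Fin n → ℝ) (hz : ∀ i, z i = 1 ∨ z i = -1)
    (S : Matrix (Fin n) (Fin n) ℝ) (hSdef : S = ddiag (A * vecMulVec z z) - A)
    (hpsd : S.PosSemidef) (hSz : S.mulVec z = 0)
    (hker : ∀ u : Fin n → ℝ, S.mulVec u = 0 → ∃ t : ℝ, u = t • z) :
    (∀ X : Matrix (Fin n) (Fin n) ℝ, X.PosSemidef → (∀ i, X i i = 1) →
      Matrix.trace (A * X) ≤ Matrix.trace (A * vecMulVec z z)) ∧
    (∀ X : Matrix (Fin n) (Fin n) ℝ, X.PosSemidef → (∀ i, X i i = 1) →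
      Matrix.trace (A * X) = Matrix.trace (A * vecMulVec z z) → X = vecMulVec z z) :=
  stmt9_general A z hz S hSdef hpsd hker
end

section
/- Let A be a symmetric n×n matrix with nonnegative diagonal, and Q = [x, y] ∈ ℝ^{n×2} with unit-norm rows satisfying the first-order condition (ddiag(AQQᵀ) − A)Q = 0 and the second-order condition ddiag(AQQᵀ) − A∘(QQᵀ) ⪰ 0. Then for every i, (AQQᵀ)_{ii} = ⟨A_i, x⟩x_i + ⟨A_i, y⟩y_i = √(⟨A_i,x⟩² + ⟨A_i,y⟩²), where A_i is the i-th row of A. -/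
open Matrix BigOperators

/-!
Row `i` of the first-order condition says that the row `(AQ)ᵢ` is the multiple `dᵢ Qᵢ` of the
unit row `Qᵢ`, where `dᵢ = (AQQᵀ)ᵢᵢ`; hence `‖(AQ)ᵢ‖ = |dᵢ|`. The diagonal of the positive
semidefinite second-order matrix is `dᵢ - Aᵢᵢ ≥ 0`, so `dᵢ ≥ Aᵢᵢ ≥ 0` and `|dᵢ| = dᵢ`.
-/

namespace Matrix

variable {m k α : Type*}

lemma mul_transpose_apply_self [Fintype k] [NonUnitalNonAssocSemiring α] (B Q : Matrix m k α)
    (i : m) : (B * Qᵀ) i i = ∑ j, B i j * Q i j := by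
  simp only [mul_apply, transpose_apply]

lemma mul_apply_eq_mul_of_diagonal_sub_mul_eq_zero [Fintype m] [DecidableEq m] [Ring α]
    {A : Matrix m m α} {d : m → α} {Q : Matrix m k α} (h : (diagonal d - A) * Q = 0)
    (i : m) (j : k) : (A * Q) i j = d i * Q i j := by
  have hij := congrFun (congrFun h i) j
  rw [Matrix.sub_mul, sub_apply, diagonal_mul, zero_apply, sub_eq_zero] at hij
  exact hij.symm

variable [Fintype m] [Fintype k] {A : Matrix m m ℝ} {Q : Matrix m k ℝ} {i : m}

lemma le_mul_mul_transpose_apply_self [DecidableEq m] (hrow : ∑ j, Q i j ^ 2 = 1)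
    (hso : (diagonal (fun l => (A * Q * Qᵀ) l l) - A.hadamard (Q * Qᵀ)).PosSemidef) :
    A i i ≤ (A * Q * Qᵀ) i i := by
  have hQQ : (Q * Qᵀ) i i = 1 := by
    rw [mul_transpose_apply_self, ← hrow]
    simp only [sq]
  have := hso.diag_nonneg (i := i)
  rwa [sub_apply, diagonal_apply_eq, hadamard_apply, hQQ, mul_one, sub_nonneg] at this

lemma mul_mul_transpose_apply_self_eq_sqrt (hrow : ∑ j, Q i j ^ 2 = 1)
    (hrowAQ : ∀ j, (A * Q) i j = (A * Q * Qᵀ) i i * Q i j) (hnonneg : 0 ≤ (A * Q * Qᵀ) i i) :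
    (A * Q * Qᵀ) i i = √(∑ j, (A * Q) i j ^ 2) := by
  have hsq : ∑ j, (A * Q) i j ^ 2 = (A * Q * Qᵀ) i i ^ 2 := by
    simp only [hrowAQ, mul_pow, ← Finset.mul_sum, hrow, mul_one]
  rw [hsq, Real.sqrt_sq hnonneg]

end Matrix

theorem stmt10_general {n : ℕ} (A : Matrix (Fin n) (Fin n) ℝ)
    (hdiagA : ∀ i, 0 ≤ A i i)
    (Q : Matrix (Fin n) (Fin 2) ℝ) (hrows : ∀ i, (Q i 0) ^ 2 + (Q i 1) ^ 2 = 1)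
    (hfo : (ddiag (A * Q * Qᵀ) - A) * Q = 0)
    (hso : (ddiag (A * Q * Qᵀ) - A.hadamard (Q * Qᵀ)).PosSemidef) :
    ∀ i, (A * Q * Qᵀ) i i
        = A.mulVec (fun k => Q k 0) i * Q i 0 + A.mulVec (fun k => Q k 1) i * Q i 1 ∧
      (A * Q * Qᵀ) i i
        = Real.sqrt ((A.mulVec (fun k => Q k 0) i) ^ 2 + (A.mulVec (fun k => Q k 1) i) ^ 2) := by
  intro i
  have hrow : ∑ j, Q i j ^ 2 = 1 := by rw [Fin.sum_univ_two, hrows]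
  have hrowAQ := mul_apply_eq_mul_of_diagonal_sub_mul_eq_zero hfo i
  have hnonneg := (hdiagA i).trans (le_mul_mul_transpose_apply_self hrow hso)
  refine ⟨?_, ?_⟩
  · rw [mul_transpose_apply_self, Fin.sum_univ_two]
    rfl
  · rw [mul_mul_transpose_apply_self_eq_sqrt hrow hrowAQ hnonneg, Fin.sum_univ_two]
    rfl

/-- At first- and second-order critical points, with diag(A) ≥ 0,
the diagonal of AQQᵀ equals the row norms of AQ. -/
theorem stmt10 {n : ℕ} (A : Matrix (Fin n) (Fin n) ℝ) (hA : A.IsSymm)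
    (hdiagA : ∀ i, 0 ≤ A i i)
    (Q : Matrix (Fin n) (Fin 2) ℝ) (hrows : ∀ i, (Q i 0) ^ 2 + (Q i 1) ^ 2 = 1)
    (hfo : (ddiag (A * Q * Qᵀ) - A) * Q = 0)
    (hso : (ddiag (A * Q * Qᵀ) - A.hadamard (Q * Qᵀ)).PosSemidef) :
    ∀ i, (A * Q * Qᵀ) i i
        = A.mulVec (fun k => Q k 0) i * Q i 0 + A.mulVec (fun k => Q k 1) i * Q i 1 ∧
      (A * Q * Qᵀ) i i
        = Real.sqrt ((A.mulVec (fun k => Q k 0) i) ^ 2 + (A.mulVec (fun k => Q k 1) i) ^ 2) :=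
  stmt10_general A hdiagA Q hrows hfo hso
end

section
/- Let Δ be a symmetric n×n matrix with ‖Δ‖ ≤ γ√n and ‖Δ𝟙‖_∞ ≤ γ√(n log n). Let Q ∈ ℝ^{n×2} with ‖Q‖_F² = n and ‖Qᵀ𝟙‖₂ ≥ n(1 − 8γc). Then for every i, ‖e_iᵀΔQ‖₂ ≤ γ√n(√(log n) + 4√(γcn)). -/
/-!
Split each column of `Q` into its mean and its centred part, `Q = (1/n) 𝟙 𝟙ᵀ Q + Q̃`.
The mean part contributes `(Δ𝟙)ᵢ · Qᵀ𝟙 / n`, of norm at most `‖Δ𝟙‖_∞`, because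
`‖Qᵀ𝟙‖₂ ≤ √n ‖Q‖_F = n`. The centred part contributes at most `‖Δ eᵢ‖₂ ‖Q̃‖_F ≤ ‖Δ‖ ‖Q̃‖_F`
by Cauchy–Schwarz, and `‖Q̃‖_F² = ‖Q‖_F² - ‖Qᵀ𝟙‖₂² / n ≤ n - n (1 - 8γc)² ≤ 16γcn`.
-/

open Matrix BigOperators

lemma sqrt_sum_add_sq_le {κ : Type*} [Fintype κ] (a b : κ → ℝ) :
    √(∑ j, (a j + b j) ^ 2) ≤ √(∑ j, a j ^ 2) + √(∑ j, b j ^ 2) := by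
  simpa [EuclideanSpace.norm_eq] using
    norm_add_le (WithLp.toLp 2 a : EuclideanSpace ℝ κ) (WithLp.toLp 2 b)

lemma sqrt_sum_sq_col_le_opNorm {n : ℕ} (Δ : Matrix (Fin n) (Fin n) ℝ) (i : Fin n) :
    √(∑ k, Δ k i ^ 2) ≤ opNorm Δ := by
  have := (Matrix.toEuclideanLin Δ).toContinuousLinearMap.le_opNorm (EuclideanSpace.single i 1)
  simpa [opNorm, EuclideanSpace.norm_eq, Matrix.mulVec_single] using this

lemma Matrix.IsSymm.sqrt_sum_sq_row_le_opNorm {n : ℕ} {Δ : Matrix (Fin n) (Fin n) ℝ}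
    (hΔ : Δ.IsSymm) (i : Fin n) : √(∑ k, Δ i k ^ 2) ≤ opNorm Δ := by
  simpa only [hΔ.apply i] using sqrt_sum_sq_col_le_opNorm Δ i

section Centering

variable {ι κ : Type*} [Fintype ι]

noncomputable def centerCols (Q : Matrix ι κ ℝ) : Matrix ι κ ℝ :=
  fun k j => Q k j - (∑ l, Q l j) / Fintype.card ι

lemma sum_sq_centerCols [Fintype κ] (Q : Matrix ι κ ℝ) :
    ∑ j, ∑ k, centerCols Q k j ^ 2
      = ∑ j, ∑ k, Q k j ^ 2 - (∑ j, (∑ k, Q k j) ^ 2) / Fintype.card ι := by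
  rw [Finset.sum_div, ← Finset.sum_sub_distrib]
  refine Finset.sum_congr rfl fun j _ => ?_
  rcases isEmpty_or_nonempty ι with hι | hι
  · simp
  have hN : (Fintype.card ι : ℝ) ≠ 0 := by positivity
  simp only [centerCols, sub_sq, Finset.sum_add_distrib, Finset.sum_sub_distrib, ← Finset.sum_mul,
    ← Finset.mul_sum, Finset.sum_const, Finset.card_univ, nsmul_eq_mul]
  field_simp
  ring

lemma sum_mul_eq_mean_add_sum_mul_centerCols (r : ι → ℝ) (Q : Matrix ι κ ℝ) (j : κ) :
    ∑ k, r k * Q k j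
      = (∑ k, r k) * (∑ k, Q k j) / Fintype.card ι + ∑ k, r k * centerCols Q k j := by
  simp only [centerCols, mul_sub, Finset.sum_sub_distrib, ← Finset.sum_mul]
  ring

lemma sqrt_sum_sq_sum_mul_le [Fintype κ] (r : ι → ℝ) (Q : Matrix ι κ ℝ) :
    √(∑ j, (∑ k, r k * Q k j) ^ 2)
      ≤ |∑ k, r k| / Fintype.card ι * √(∑ j, (∑ k, Q k j) ^ 2)
        + √(∑ k, r k ^ 2) * √(∑ j, ∑ k, centerCols Q k j ^ 2) := by
  simp_rw [sum_mul_eq_mean_add_sum_mul_centerCols r Q]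
  refine (sqrt_sum_add_sq_le _ _).trans (add_le_add (le_of_eq ?_) ?_)
  · simp_rw [mul_div_right_comm _ _ (Fintype.card ι : ℝ), mul_pow, ← Finset.mul_sum]
    rw [Real.sqrt_mul (sq_nonneg _), Real.sqrt_sq_eq_abs, abs_div, Nat.abs_cast]
  · rw [← Real.sqrt_mul (by positivity), Finset.mul_sum]
    exact Real.sqrt_le_sqrt (Finset.sum_le_sum fun j _ => Finset.sum_mul_sq_le_sq_mul_sq _ _ _)

lemma sum_sq_colSum_le [Fintype κ] (Q : Matrix ι κ ℝ) :
    ∑ j, (∑ k, Q k j) ^ 2 ≤ Fintype.card ι * ∑ j, ∑ k, Q k j ^ 2 := by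
  rw [Finset.mul_sum]
  exact Finset.sum_le_sum fun j _ => sq_sum_le_card_mul_sum_sq

end Centering

lemma sub_div_le_of_mul_one_sub_le_sqrt {N S x : ℝ} (hN : 0 < N) (hS : 0 ≤ S) (hx : 0 ≤ x)
    (h : N * (1 - x) ≤ √S) : N - S / N ≤ 2 * x * N := by
  have hS' : N ^ 2 * (1 - 2 * x) ≤ S := by
    rcases le_or_gt x 1 with hx1 | hx1
    · have := pow_le_pow_left₀ (by nlinarith) h 2
      rw [Real.sq_sqrt hS] at this
      nlinarith [sq_nonneg (N * x)]
    · nlinarith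
  rw [sub_le_iff_le_add, ← sub_le_iff_le_add', le_div_iff₀ hN]
  nlinarith

/-- Bound on the largest row of ΔQ at well-correlated points. -/
theorem stmt12 {n : ℕ} (Δ : Matrix (Fin n) (Fin n) ℝ) (hΔ : Δ.IsSymm)
    (γ c : ℝ) (hγ : 0 ≤ γ) (hc : 0 ≤ c)
    (hop : opNorm Δ ≤ γ * Real.sqrt n)
    (hinf : ∀ i, |∑ j, Δ i j| ≤ γ * Real.sqrt ((n : ℝ) * Real.log n))
    (Q : Matrix (Fin n) (Fin 2) ℝ) (hQ : ∑ i, ∑ j, (Q i j) ^ 2 = (n : ℝ))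
    (hcorr : (n : ℝ) * (1 - 8 * γ * c) ≤ Real.sqrt (∑ j, (∑ i, Q i j) ^ 2)) :
    ∀ i, Real.sqrt (∑ j, ((Δ * Q) i j) ^ 2)
      ≤ γ * Real.sqrt n * (Real.sqrt (Real.log n) + 4 * Real.sqrt (γ * c * n)) := by
  intro i
  have hn : (0 : ℝ) < n := Nat.cast_pos.mpr (Fin.pos i)
  rw [Finset.sum_comm] at hQ
  have hcols : √(∑ j, (∑ k, Q k j) ^ 2) ≤ n :=
    (Real.sqrt_le_left hn.le).2 <|
      (sum_sq_colSum_le Q).trans_eq (by rw [hQ, Fintype.card_fin, sq])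
  have hcenter : √(∑ j, ∑ k, centerCols Q k j ^ 2) ≤ 4 * √(γ * c * n) := by
    have hresid := sub_div_le_of_mul_one_sub_le_sqrt hn (by positivity) (by positivity) hcorr
    rw [Real.sqrt_le_left (by positivity), mul_pow, Real.sq_sqrt (by positivity),
      sum_sq_centerCols, hQ, Fintype.card_fin]
    linarith
  calc √(∑ j, ((Δ * Q) i j) ^ 2)
      ≤ |∑ k, Δ i k| / n * √(∑ j, (∑ k, Q k j) ^ 2)
        + √(∑ k, Δ i k ^ 2) * √(∑ j, ∑ k, centerCols Q k j ^ 2) := by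
        simpa only [Matrix.mul_apply, Fintype.card_fin] using sqrt_sum_sq_sum_mul_le (Δ i) Q
    _ ≤ γ * √(n * Real.log n) / n * n + γ * √n * (4 * √(γ * c * n)) := by
        gcongr
        · exact hinf i
        · exact (hΔ.sqrt_sum_sq_row_le_opNorm i).trans hop
    _ = γ * √n * (√(Real.log n) + 4 * √(γ * c * n)) := by
        rw [Real.sqrt_mul hn.le]
        field_simp
end

section
/- Let A be a symmetric n×n matrix, z ∈ {±1}ⁿ, Δ symmetric with A = zzᵀ + σΔ, and Q ∈ ℝ^{n×2} satisfying (ddiag(AQQᵀ) − A)Q = 0. Then rank(Q) ≤ n + 1 − rank(ddiag(AQQᵀ) − σΔ). In particular, if the diagonal matrix D = ddiag(AQQᵀ) satisfies min_i D_{ii} > σ‖Δ‖, then rank(Q) = 1. -/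
open Matrix BigOperators

/-!
The first-order condition puts the columns of `Q` in the kernel of `D - A`, where
`D = ddiag (A Q Qᵀ)`, so `rank Q + rank (D - A) ≤ n`. Since `D - σΔ = (D - A) + z zᵀ` is a
rank-one perturbation of `D - A`, this gives the rank inequality. If every diagonal entry of
`D` exceeds `σ ‖Δ‖`, the quadratic form of `D - σΔ` is positive, so `D - σΔ` is invertible and
`rank Q ≤ 1`; and `Q ≠ 0` because its rows are unit vectors.
-/

namespace Matrix

variable {m n K : Type*} [Fintype n] [Field K]

theorem rank_add_le (M N : Matrix m n K) : (M + N).rank ≤ M.rank + N.rank := by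
  rw [rank, rank, rank, mulVecLin_add]
  exact (Submodule.finrank_mono (LinearMap.range_add_le _ _)).trans
    (Submodule.finrank_add_le_finrank_add_finrank _ _)

theorem rank_eq_zero_iff [DecidableEq n] {M : Matrix m n K} : M.rank = 0 ↔ M = 0 := by
  rw [rank, Submodule.finrank_eq_zero, LinearMap.range_eq_bot, ← toLin'_apply',
    LinearEquiv.map_eq_zero_iff]

theorem rank_eq_card_of_dotProduct_mulVec_pos [DecidableEq n] [LinearOrder K]
    [IsStrictOrderedRing K] {M : Matrix n n K} (hM : ∀ x ≠ 0, 0 < x ⬝ᵥ M *ᵥ x) :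
    M.rank = Fintype.card n := by
  refine rank_of_isUnit M (mulVec_injective_iff_isUnit.mp fun x y hxy => ?_)
  by_contra hne
  have := hM (x - y) (sub_ne_zero.mpr hne)
  rw [mulVec_sub, hxy, sub_self, dotProduct_zero] at this
  exact this.false

end Matrix

theorem opNorm_smul {n : ℕ} (c : ℝ) (M : Matrix (Fin n) (Fin n) ℝ) :
    opNorm (c • M) = |c| * opNorm M := by
  rw [opNorm, opNorm, map_smul, LinearMap.toContinuousLinearMap.map_smul, norm_smul,
    Real.norm_eq_abs]

theorem dotProduct_mulVec_le_opNorm_mul {n : ℕ} (M : Matrix (Fin n) (Fin n) ℝ)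
    (x : Fin n → ℝ) : x ⬝ᵥ M *ᵥ x ≤ opNorm M * (x ⬝ᵥ x) := by
  set T := (toEuclideanLin M).toContinuousLinearMap
  set y : EuclideanSpace ℝ (Fin n) := WithLp.toLp 2 x
  have hTy : T y = WithLp.toLp 2 (M *ᵥ x) := rfl
  calc x ⬝ᵥ M *ᵥ x = inner ℝ y (T y) := by
        rw [hTy, EuclideanSpace.inner_toLp_toLp, star_trivial, dotProduct_comm]
    _ ≤ ‖y‖ * (‖T‖ * ‖y‖) := (real_inner_le_norm _ _).trans (by gcongr; exact T.le_opNorm y)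
    _ = opNorm M * (x ⬝ᵥ x) := by
        rw [mul_left_comm, ← real_inner_self_eq_norm_mul_norm, EuclideanSpace.inner_toLp_toLp,
          star_trivial]
        rfl

theorem dotProduct_diagonal_sub_mulVec_pos {n : ℕ} {d : Fin n → ℝ}
    {M : Matrix (Fin n) (Fin n) ℝ} (hd : ∀ i, opNorm M < d i) {x : Fin n → ℝ} (hx : x ≠ 0) :
    0 < x ⬝ᵥ (diagonal d - M) *ᵥ x := by
  have hdiag : opNorm M * (x ⬝ᵥ x) < x ⬝ᵥ diagonal d *ᵥ x := by
    obtain ⟨i, hi⟩ := Function.ne_iff.mp hx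
    simp only [dotProduct, mulVec_diagonal, Finset.mul_sum]
    refine Finset.sum_lt_sum (fun j _ => ?_) ⟨i, Finset.mem_univ _, ?_⟩
    · nlinarith [hd j, mul_self_nonneg (x j)]
    · nlinarith [hd i, mul_self_pos.mpr hi]
  rw [sub_mulVec, dotProduct_sub, sub_pos]
  exact (dotProduct_mulVec_le_opNorm_mul M x).trans_lt hdiag

theorem rank_diagonal_sub_eq_of_opNorm_lt {n : ℕ} {d : Fin n → ℝ}
    {M : Matrix (Fin n) (Fin n) ℝ} (hd : ∀ i, opNorm M < d i) :
    (diagonal d - M).rank = n :=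
  (rank_eq_card_of_dotProduct_mulVec_pos fun _ hx =>
    dotProduct_diagonal_sub_mulVec_pos hd hx).trans (Fintype.card_fin n)

theorem stmt13_general {n : ℕ} (hn : 0 < n)
    (A Δ : Matrix (Fin n) (Fin n) ℝ)
    (z : Fin n → ℝ)
    (σ : ℝ) (hσ : 0 ≤ σ)
    (hAdef : A = vecMulVec z z + σ • Δ)
    (Q : Matrix (Fin n) (Fin 2) ℝ) (hrows : ∀ i, (Q i 0) ^ 2 + (Q i 1) ^ 2 = 1)
    (hfo : (ddiag (A * Q * Qᵀ) - A) * Q = 0) :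
    Q.rank + (ddiag (A * Q * Qᵀ) - σ • Δ).rank ≤ n + 1 ∧
    ((∀ i, σ * opNorm Δ < (A * Q * Qᵀ) i i) → Q.rank = 1) := by
  set D := ddiag (A * Q * Qᵀ)
  have hker : (D - A).rank + Q.rank ≤ n := by
    simpa using rank_add_rank_le_card_of_mul_eq_zero hfo
  have hpert : (D - σ • Δ).rank ≤ (D - A).rank + 1 := by
    have hsplit : D - σ • Δ = (D - A) + vecMulVec z z := by rw [hAdef]; abel
    rw [hsplit]
    exact (rank_add_le _ _).trans (add_le_add_right (by simpa using rank_vecMulVec_le z z) _)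
  refine ⟨by omega, fun hdom => ?_⟩
  have hfull : (D - σ • Δ).rank = n :=
    rank_diagonal_sub_eq_of_opNorm_lt fun i => by
      rw [opNorm_smul, abs_of_nonneg hσ]; exact hdom i
  have hQ : Q ≠ 0 := fun h => by
    simpa [h] using hrows ⟨0, hn⟩
  have hQrank : Q.rank ≠ 0 := mt Matrix.rank_eq_zero_iff.mp hQ
  omega

/-- Rank control: rank(Q) + rank(ddiag(AQQᵀ) − σΔ) ≤ n + 1; and if the diagonal
dominates σ‖Δ‖ then rank(Q) = 1. -/
theorem stmt13 {n : ℕ} (hn : 0 < n)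
    (A Δ : Matrix (Fin n) (Fin n) ℝ) (hA : A.IsSymm) (hΔ : Δ.IsSymm)
    (z : Fin n → ℝ) (hz : ∀ i, z i = 1 ∨ z i = -1)
    (σ : ℝ) (hσ : 0 ≤ σ)
    (hAdef : A = vecMulVec z z + σ • Δ)
    (Q : Matrix (Fin n) (Fin 2) ℝ) (hrows : ∀ i, (Q i 0) ^ 2 + (Q i 1) ^ 2 = 1)
    (hfo : (ddiag (A * Q * Qᵀ) - A) * Q = 0) :
    Q.rank + (ddiag (A * Q * Qᵀ) - σ • Δ).rank ≤ n + 1 ∧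
    ((∀ i, σ * opNorm Δ < (A * Q * Qᵀ) i i) → Q.rank = 1) :=
  stmt13_general hn A Δ z σ hσ hAdef Q hrows hfo
end

section
/- Let z ∈ {±1}ⁿ, A = zzᵀ + σΔ with σ = c√n, Δ symmetric, SDP(Δ)/n ≤ γ√n and ‖Δ‖ ≤ γ√n, for γ, c ≥ 0 with 8γc ≤ 1. If Q ∈ ℝ^{n×2} has unit-norm rows and satisfies both the first-order condition (ddiag(AQQᵀ) − A)Q = 0 and the second-order condition ddiag(AQQᵀ) − A∘(QQᵀ) ⪰ 0, then ‖Qᵀz‖₂/n ≥ 1 − 8γc. -/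
open Matrix BigOperators

/-!
Write `x, y` for the columns of `Q`, `λᵢ = (AQQᵀ)ᵢᵢ`, `α = ⟨x, z⟩`, `β = ⟨y, z⟩` and
`G = QᵀQ = [[a, e], [e, b]]`, so that `a + b = n`. Eliminating `λᵢ` from the first-order equations
`λᵢxᵢ = zᵢα + σ(Δx)ᵢ`, `λᵢyᵢ = zᵢβ + σ(Δy)ᵢ` gives `αyᵢ - βxᵢ = σzᵢ((Δy)ᵢxᵢ - (Δx)ᵢyᵢ)`, hence
`α²b + β²a - 2eαβ = ‖αy - βx‖² ≤ σ²‖Δ‖²n`. Testing the second-order condition against `z ∘ x` and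
`z ∘ y` gives `‖QQᵀ‖_F² - 2σ‖Δ‖n ≤ α² + β²`; here `‖Δ‖` controls `⟨Δ, zzᵀ ∘ QQᵀ ∘ QQᵀ⟩` because
that matrix is `WWᵀ` for `W = diag(z)` times the face-splitting product of `Q` with itself, so the
pairing is a sum of `wᵀΔw` over the columns `w` of `W`, whose squared norms add up to `n`. Since `σ‖Δ‖ ≤ γcn` and `‖QQᵀ‖_F² = ‖G‖_F² = n² - 2 det G`, the second bound gives
`α² + β² ≥ n²/4`; with `n(α²b + β²a - 2eαβ) ≥ det G (α² + β²)` the first one then forces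
`det G ≤ 4(γc)²n²`, and the second one improves to `α² + β² ≥ n²(1 - 2γc - 8(γc)²) ≥ n²(1 - 8γc)²`.
-/

theorem quadratic_nonneg_of_sq_le_mul {p q m : ℝ} (hp : 0 ≤ p) (hq : 0 ≤ q) (hm : m ^ 2 ≤ p * q)
    (s t : ℝ) : 0 ≤ p * s ^ 2 + q * t ^ 2 - 2 * m * s * t := by
  rcases hp.eq_or_lt with rfl | hp
  · obtain rfl : m = 0 := by nlinarith
    nlinarith [sq_nonneg t]
  · refine nonneg_of_mul_nonneg_right ?_ hp
    nlinarith [sq_nonneg (p * s - m * t), mul_nonneg (sub_nonneg.2 hm) (sq_nonneg t)]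

theorem mul_one_sub_le_sqrt_of_gram_bounds {t n a b e α β : ℝ} (ht : 0 ≤ t) (h8 : 8 * t ≤ 1)
    (hn : 0 < n) (hab : a + b = n) (he : e ^ 2 ≤ a * b)
    (hfirst : α ^ 2 * b + β ^ 2 * a - 2 * e * α * β ≤ t ^ 2 * n ^ 3)
    (hsecond : a ^ 2 + 2 * e ^ 2 + b ^ 2 - 2 * t * n ^ 2 ≤ α ^ 2 + β ^ 2) :
    n * (1 - 8 * t) ≤ √(α ^ 2 + β ^ 2) := by
  subst hab
  set d := a * b - e ^ 2
  set M := α ^ 2 + β ^ 2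
  have hd4 : 4 * d ≤ (a + b) ^ 2 := by nlinarith [sq_nonneg (a - b), sq_nonneg e]
  -- `(a + b) • adj G - det G • 1 = [[b² + e², -(a + b)e], [-(a + b)e, a² + e²]]` has determinant
  -- `(det G)²`, so it is positive semidefinite.
  have hdM : d * M ≤ (a + b) * (α ^ 2 * b + β ^ 2 * a - 2 * e * α * β) := by
    have := quadratic_nonneg_of_sq_le_mul (p := b ^ 2 + e ^ 2) (q := a ^ 2 + e ^ 2)
      (m := (a + b) * e) (by positivity) (by positivity) (by nlinarith [sq_nonneg d]) α β
    linarith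
  have hM : (a + b) ^ 2 / 4 ≤ M := by nlinarith
  have hd : d ≤ 4 * t ^ 2 * (a + b) ^ 2 := by
    refine le_of_mul_le_mul_right ?_ (by positivity : 0 < (a + b) ^ 2 / 4)
    nlinarith
  refine (le_abs_self _).trans (Real.abs_le_sqrt ?_)
  nlinarith

theorem sq_mul_sub_mul_le {l x y z α β σ u v : ℝ} (hz : z ^ 2 = 1) (hxy : x ^ 2 + y ^ 2 = 1)
    (hx : l * x = z * α + σ * u) (hy : l * y = z * β + σ * v) :
    (α * y - β * x) ^ 2 ≤ σ ^ 2 * (u ^ 2 + v ^ 2) := by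
  have h : α * y - β * x = σ * z * (v * x - u * y) := by
    linear_combination (z * x) * hy - (z * y) * hx + (β * x - α * y) * hz
  have hlagrange : (v * x - u * y) ^ 2 + (u * x + v * y) ^ 2 = u ^ 2 + v ^ 2 := by
    linear_combination (u ^ 2 + v ^ 2) * hxy
  rw [h, mul_pow, mul_pow, hz, mul_one]
  exact mul_le_mul_of_nonneg_left (by nlinarith [sq_nonneg (u * x + v * y)]) (sq_nonneg σ)

section OperatorNorm

variable {n : ℕ} (M : Matrix (Fin n) (Fin n) ℝ)

theorem norm_mulVec_le_opNorm (p : Fin n → ℝ) :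
    ‖WithLp.toLp 2 (M *ᵥ p)‖ ≤ opNorm M * ‖WithLp.toLp 2 p‖ :=
  (Matrix.toEuclideanLin M).toContinuousLinearMap.le_opNorm (WithLp.toLp 2 p)

theorem mulVec_dotProduct_mulVec_le_opNorm_sq (p : Fin n → ℝ) :
    M *ᵥ p ⬝ᵥ M *ᵥ p ≤ opNorm M ^ 2 * (p ⬝ᵥ p) := by
  have h := pow_le_pow_left₀ (norm_nonneg _) (norm_mulVec_le_opNorm M p) 2
  rwa [mul_pow, ← real_inner_self_eq_norm_sq, ← real_inner_self_eq_norm_sq,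
    EuclideanSpace.inner_toLp_toLp, EuclideanSpace.inner_toLp_toLp, star_trivial,
    star_trivial] at h

theorem abs_dotProduct_mulVec_le_opNorm (p : Fin n → ℝ) :
    |p ⬝ᵥ M *ᵥ p| ≤ opNorm M * (p ⬝ᵥ p) := by
  have h := abs_real_inner_le_norm (WithLp.toLp 2 p) (WithLp.toLp 2 (M *ᵥ p))
  rw [EuclideanSpace.inner_toLp_toLp, star_trivial, dotProduct_comm] at h
  calc |p ⬝ᵥ M *ᵥ p| ≤ ‖WithLp.toLp 2 p‖ * (opNorm M * ‖WithLp.toLp 2 p‖) :=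
        h.trans (mul_le_mul_of_nonneg_left (norm_mulVec_le_opNorm M p) (norm_nonneg _))
    _ = opNorm M * (p ⬝ᵥ p) := by
        rw [mul_left_comm, ← sq, ← real_inner_self_eq_norm_sq, EuclideanSpace.inner_toLp_toLp,
          star_trivial]

theorem abs_sum_dotProduct_mulVec_le_opNorm {κ : Type*} [Fintype κ] (w : κ → Fin n → ℝ) :
    |∑ k, w k ⬝ᵥ M *ᵥ w k| ≤ opNorm M * ∑ k, w k ⬝ᵥ w k := by
  rw [Finset.mul_sum]
  exact (Finset.abs_sum_le_sum_abs _ _).trans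
    (Finset.sum_le_sum fun k _ => abs_dotProduct_mulVec_le_opNorm M (w k))

end OperatorNorm

def faceSplitting {ι κ κ' : Type*} (Q : Matrix ι κ ℝ) (R : Matrix ι κ' ℝ) :
    Matrix ι (κ × κ') ℝ :=
  of fun i kl => Q i kl.1 * R i kl.2

theorem faceSplitting_mul_transpose_apply {ι κ κ' : Type*} [Fintype κ] [Fintype κ']
    (Q : Matrix ι κ ℝ) (R : Matrix ι κ' ℝ) (i j : ι) :
    (faceSplitting Q R * (faceSplitting Q R)ᵀ) i j = (Q * Qᵀ) i j * (R * Rᵀ) i j := by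
  simp only [faceSplitting, mul_apply, transpose_apply, of_apply, Fintype.sum_prod_type,
    Finset.sum_mul_sum]
  exact Finset.sum_congr rfl fun k _ => Finset.sum_congr rfl fun l _ => by ring

section Gram

variable {ι κ : Type*} [Fintype ι] [Fintype κ]

theorem sum_col_dotProduct_col_self (Q : Matrix ι κ ℝ) :
    ∑ k, Qᵀ k ⬝ᵥ Qᵀ k = ∑ i, (Q * Qᵀ) i i := by
  simp only [dotProduct, mul_apply, transpose_apply]
  exact Finset.sum_comm

theorem dotProduct_sq_le_dotProduct_self_mul_dotProduct_self (x y : ι → ℝ) :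
    (x ⬝ᵥ y) ^ 2 ≤ (x ⬝ᵥ x) * (y ⬝ᵥ y) := by
  simpa only [dotProduct, sq] using Finset.sum_mul_sq_le_sq_mul_sq Finset.univ x y

theorem sum_sq_mul_transpose_apply (Q : Matrix ι κ ℝ) :
    ∑ i, ∑ j, (Q * Qᵀ) i j ^ 2 = ∑ k, ∑ l, (Qᵀ k ⬝ᵥ Qᵀ l) ^ 2 := by
  simp only [sq, dotProduct, mul_apply, transpose_apply, Finset.sum_mul_sum]
  calc _ = ∑ i, ∑ k, ∑ j, ∑ l, Q i k * Q j k * (Q i l * Q j l) :=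
        Finset.sum_congr rfl fun _ _ => Finset.sum_comm
    _ = ∑ k, ∑ i, ∑ l, ∑ j, Q i k * Q j k * (Q i l * Q j l) :=
        Finset.sum_comm.trans
          (Finset.sum_congr rfl fun _ _ => Finset.sum_congr rfl fun _ _ => Finset.sum_comm)
    _ = _ := Finset.sum_congr rfl fun _ _ => Finset.sum_comm.trans
        (Finset.sum_congr rfl fun _ _ => Finset.sum_congr rfl fun _ _ =>
          Finset.sum_congr rfl fun _ _ => by ring)

theorem sum_dotProduct_mulVec_mul_col (S : Matrix ι ι ℝ) (Q : Matrix ι κ ℝ) (z : ι → ℝ) :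
    ∑ k, (z * Qᵀ k) ⬝ᵥ S *ᵥ (z * Qᵀ k) = ∑ i, ∑ j, S i j * (z i * z j * (Q * Qᵀ) i j) := by
  simp only [dotProduct, mulVec, mul_apply, Pi.mul_apply, transpose_apply, Finset.mul_sum]
  rw [Finset.sum_comm]
  refine Finset.sum_congr rfl fun i _ => ?_
  rw [Finset.sum_comm]
  exact Finset.sum_congr rfl fun j _ => Finset.sum_congr rfl fun k _ => by ring

theorem sum_col_dotProduct_col_self_eq_card {Q : Matrix ι κ ℝ}
    (hQ : ∀ i, (Q * Qᵀ) i i = 1) : ∑ k, Qᵀ k ⬝ᵥ Qᵀ k = Fintype.card ι := by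
  simp [sum_col_dotProduct_col_self, hQ]

theorem sum_mul_col_dotProduct_mul_col_eq_card {z : ι → ℝ} (hz : ∀ i, z i ^ 2 = 1)
    {Q : Matrix ι κ ℝ} (hQ : ∀ i, (Q * Qᵀ) i i = 1) :
    ∑ k, (z * Qᵀ k) ⬝ᵥ (z * Qᵀ k) = Fintype.card ι := by
  calc ∑ k, (z * Qᵀ k) ⬝ᵥ (z * Qᵀ k) = ∑ i, z i ^ 2 * (Q * Qᵀ) i i := by
        simp only [dotProduct, Pi.mul_apply, transpose_apply, mul_apply, Finset.mul_sum]
        rw [Finset.sum_comm]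
        exact Finset.sum_congr rfl fun i _ => Finset.sum_congr rfl fun k _ => by ring
    _ = Fintype.card ι := by simp [hz, hQ]

theorem sum_mul_sq_le_of_posSemidef [DecidableEq ι] {A : Matrix ι ι ℝ} {Q : Matrix ι κ ℝ}
    {d : ι → ℝ} (h : (diagonal d - A ⊙ (Q * Qᵀ)).PosSemidef) (z : ι → ℝ) :
    ∑ i, ∑ j, A i j * (z i * z j) * (Q * Qᵀ) i j ^ 2 ≤ ∑ i, d i * z i ^ 2 * (Q * Qᵀ) i i := by
  have key := sum_dotProduct_mulVec_mul_col (diagonal d - A ⊙ (Q * Qᵀ)) Q z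
  have hnn : 0 ≤ ∑ k, (z * Qᵀ k) ⬝ᵥ (diagonal d - A ⊙ (Q * Qᵀ)) *ᵥ (z * Qᵀ k) :=
    Finset.sum_nonneg fun k _ => by simpa using h.dotProduct_mulVec_nonneg (z * Qᵀ k)
  simp only [Matrix.sub_apply, diagonal_apply, hadamard_apply, sub_mul, Finset.sum_sub_distrib,
    ite_mul, zero_mul, Finset.sum_ite_eq, Finset.mem_univ, if_true] at key
  have hd : ∑ i, d i * (z i * z i * (Q * Qᵀ) i i) = ∑ i, d i * z i ^ 2 * (Q * Qᵀ) i i :=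
    Finset.sum_congr rfl fun i _ => by ring
  have hA : ∑ i, ∑ j, A i j * (Q * Qᵀ) i j * (z i * z j * (Q * Qᵀ) i j)
      = ∑ i, ∑ j, A i j * (z i * z j) * (Q * Qᵀ) i j ^ 2 :=
    Finset.sum_congr rfl fun i _ => Finset.sum_congr rfl fun j _ => by ring
  linarith

theorem vecMulVec_add_smul_mulVec_apply (z : ι → ℝ) (σ : ℝ) (Δ : Matrix ι ι ℝ) (q : ι → ℝ)
    (i : ι) : ((vecMulVec z z + σ • Δ) *ᵥ q) i = z i * (q ⬝ᵥ z) + σ * (Δ *ᵥ q) i := by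
  simp [add_mulVec, vecMulVec_mulVec, smul_mulVec, dotProduct_comm, mul_comm]

theorem sum_vecMulVec_add_smul_mul_sq {z : ι → ℝ} (hz : ∀ i, z i ^ 2 = 1) (σ : ℝ)
    (Δ : Matrix ι ι ℝ) (Q : Matrix ι κ ℝ) :
    ∑ i, ∑ j, (vecMulVec z z + σ • Δ) i j * (z i * z j) * (Q * Qᵀ) i j ^ 2
      = ∑ k, ∑ l, (Qᵀ k ⬝ᵥ Qᵀ l) ^ 2 + σ * ∑ kl,
          (z * (faceSplitting Q Q)ᵀ kl) ⬝ᵥ Δ *ᵥ (z * (faceSplitting Q Q)ᵀ kl) := by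
  rw [sum_dotProduct_mulVec_mul_col, ← sum_sq_mul_transpose_apply, Finset.mul_sum,
    ← Finset.sum_add_distrib]
  refine Finset.sum_congr rfl fun i _ => ?_
  rw [Finset.mul_sum, ← Finset.sum_add_distrib]
  refine Finset.sum_congr rfl fun j _ => ?_
  rw [faceSplitting_mul_transpose_apply, Matrix.add_apply, Matrix.smul_apply, vecMulVec_apply,
    smul_eq_mul]
  linear_combination (z j ^ 2 * (Q * Qᵀ) i j ^ 2) * hz i + (Q * Qᵀ) i j ^ 2 * hz j

theorem sum_eq_sum_sq_dotProduct_add_of_mul_col_eq {z l : ι → ℝ} {Δ : Matrix ι ι ℝ} {σ : ℝ} {Q : Matrix ι κ ℝ}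
    (hQ : ∀ i, (Q * Qᵀ) i i = 1)
    (hcol : ∀ i k, l i * Q i k = z i * (Qᵀ k ⬝ᵥ z) + σ * (Δ *ᵥ Qᵀ k) i) :
    ∑ i, l i = ∑ k, ((Qᵀ k ⬝ᵥ z) ^ 2 + σ * (Qᵀ k ⬝ᵥ Δ *ᵥ Qᵀ k)) := by
  calc ∑ i, l i = ∑ i, l i * (Q * Qᵀ) i i := by simp only [hQ, mul_one]
    _ = ∑ i, ∑ k, Q i k * (l i * Q i k) := by
        simp only [mul_apply, transpose_apply, Finset.mul_sum]
        exact Finset.sum_congr rfl fun i _ => Finset.sum_congr rfl fun k _ => by ring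
    _ = ∑ k, ∑ i, Q i k * (z i * (Qᵀ k ⬝ᵥ z) + σ * (Δ *ᵥ Qᵀ k) i) := by
        rw [Finset.sum_comm]; simp only [hcol]
    _ = _ := by
        refine Finset.sum_congr rfl fun k _ => ?_
        simp only [mul_add, Finset.sum_add_distrib, dotProduct, transpose_apply]
        congr 1
        · rw [sq, Finset.sum_mul]
          exact Finset.sum_congr rfl fun i _ => by ring
        · rw [Finset.mul_sum]
          exact Finset.sum_congr rfl fun i _ => by ring

theorem cross_dotProduct_le {l x y z u v : ι → ℝ} {σ : ℝ} (hz : ∀ i, z i ^ 2 = 1)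
    (hxy : ∀ i, x i ^ 2 + y i ^ 2 = 1) (hx : ∀ i, l i * x i = z i * (x ⬝ᵥ z) + σ * u i)
    (hy : ∀ i, l i * y i = z i * (y ⬝ᵥ z) + σ * v i) :
    (x ⬝ᵥ z) ^ 2 * (y ⬝ᵥ y) + (y ⬝ᵥ z) ^ 2 * (x ⬝ᵥ x) - 2 * (x ⬝ᵥ y) * (x ⬝ᵥ z) * (y ⬝ᵥ z)
      ≤ σ ^ 2 * (u ⬝ᵥ u + v ⬝ᵥ v) := by
  set α := x ⬝ᵥ z
  set β := y ⬝ᵥ z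
  simp only [dotProduct, Finset.mul_sum, Finset.sum_mul, ← Finset.sum_add_distrib,
    ← Finset.sum_sub_distrib]
  refine Finset.sum_le_sum fun i _ => ?_
  have := sq_mul_sub_mul_le (hz i) (hxy i) (hx i) (hy i)
  linarith

end Gram

section CriticalPoint

variable {n : ℕ} {κ : Type*} [Fintype κ]

theorem mul_apply_eq_mulVec_of_ddiag_sub_mul_eq_zero {A : Matrix (Fin n) (Fin n) ℝ}
    {Q : Matrix (Fin n) κ ℝ} (hfo : (ddiag (A * Q * Qᵀ) - A) * Q = 0) (i : Fin n) (k : κ) :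
    (A * Q * Qᵀ) i i * Q i k = (A *ᵥ Qᵀ k) i := by
  have h := congrFun (congrFun hfo i) k
  rwa [Matrix.sub_mul, Matrix.sub_apply, ddiag, diagonal_mul, Matrix.zero_apply, sub_eq_zero] at h


theorem cross_dotProduct_le_of_firstOrder {z : Fin n → ℝ} (hz : ∀ i, z i ^ 2 = 1)
    {Δ A : Matrix (Fin n) (Fin n) ℝ} {σ : ℝ} (hA : A = vecMulVec z z + σ • Δ)
    {Q : Matrix (Fin n) (Fin 2) ℝ} (hrows : ∀ i, Q i 0 ^ 2 + Q i 1 ^ 2 = 1)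
    (hfo : (ddiag (A * Q * Qᵀ) - A) * Q = 0) :
    (Qᵀ 0 ⬝ᵥ z) ^ 2 * (Qᵀ 1 ⬝ᵥ Qᵀ 1) + (Qᵀ 1 ⬝ᵥ z) ^ 2 * (Qᵀ 0 ⬝ᵥ Qᵀ 0)
      - 2 * (Qᵀ 0 ⬝ᵥ Qᵀ 1) * (Qᵀ 0 ⬝ᵥ z) * (Qᵀ 1 ⬝ᵥ z)
      ≤ (σ * opNorm Δ) ^ 2 * (Qᵀ 0 ⬝ᵥ Qᵀ 0 + Qᵀ 1 ⬝ᵥ Qᵀ 1) := by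
  have hcol i k := (mul_apply_eq_mulVec_of_ddiag_sub_mul_eq_zero hfo i k).trans
    (hA ▸ vecMulVec_add_smul_mulVec_apply z σ Δ (Qᵀ k) i)
  refine (cross_dotProduct_le (x := Qᵀ 0) (y := Qᵀ 1) hz hrows (hcol · 0) (hcol · 1)).trans ?_
  have h0 := mulVec_dotProduct_mulVec_le_opNorm_sq Δ (Qᵀ 0)
  have h1 := mulVec_dotProduct_mulVec_le_opNorm_sq Δ (Qᵀ 1)
  calc σ ^ 2 * (Δ *ᵥ Qᵀ 0 ⬝ᵥ Δ *ᵥ Qᵀ 0 + Δ *ᵥ Qᵀ 1 ⬝ᵥ Δ *ᵥ Qᵀ 1)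
      ≤ σ ^ 2 * (opNorm Δ ^ 2 * (Qᵀ 0 ⬝ᵥ Qᵀ 0) + opNorm Δ ^ 2 * (Qᵀ 1 ⬝ᵥ Qᵀ 1)) := by gcongr
    _ = _ := by ring

theorem sum_sq_dotProduct_sub_le_of_secondOrder {z : Fin n → ℝ} (hz : ∀ i, z i ^ 2 = 1)
    {Δ A : Matrix (Fin n) (Fin n) ℝ} {σ : ℝ} (hσ : 0 ≤ σ) (hA : A = vecMulVec z z + σ • Δ)
    {Q : Matrix (Fin n) κ ℝ} (hQ : ∀ i, (Q * Qᵀ) i i = 1)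
    (hfo : (ddiag (A * Q * Qᵀ) - A) * Q = 0)
    (hso : (ddiag (A * Q * Qᵀ) - A ⊙ (Q * Qᵀ)).PosSemidef) :
    ∑ k, ∑ l, (Qᵀ k ⬝ᵥ Qᵀ l) ^ 2 - 2 * (σ * opNorm Δ) * n ≤ ∑ k, (Qᵀ k ⬝ᵥ z) ^ 2 := by
  have h := sum_mul_sq_le_of_posSemidef hso z
  have hcol i k := (mul_apply_eq_mulVec_of_ddiag_sub_mul_eq_zero hfo i k).trans
    (hA ▸ vecMulVec_add_smul_mulVec_apply z σ Δ (Qᵀ k) i)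
  simp only [hz, hQ, mul_one] at h
  rw [sum_eq_sum_sq_dotProduct_add_of_mul_col_eq hQ hcol, hA, sum_vecMulVec_add_smul_mul_sq hz,
    Finset.sum_add_distrib, ← Finset.mul_sum] at h
  have hX := abs_sum_dotProduct_mulVec_le_opNorm Δ fun kl => z * (faceSplitting Q Q)ᵀ kl
  have hY := abs_sum_dotProduct_mulVec_le_opNorm Δ fun k => Qᵀ k
  rw [sum_col_dotProduct_col_self_eq_card hQ, Fintype.card_fin] at hY
  rw [sum_mul_col_dotProduct_mul_col_eq_card hz fun i => by
    rw [faceSplitting_mul_transpose_apply, hQ, mul_one], Fintype.card_fin] at hX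
  have hXσ := mul_le_mul_of_nonneg_left (abs_le.1 hX).1 hσ
  have hYσ := mul_le_mul_of_nonneg_left (abs_le.1 hY).2 hσ
  linarith

end CriticalPoint

theorem stmt17_general {n : ℕ} (hn : 0 < n) (z : Fin n → ℝ) (hz : ∀ i, z i = 1 ∨ z i = -1)
    (Δ A : Matrix (Fin n) (Fin n) ℝ)
    (σ c γ : ℝ) (hc : 0 ≤ c) (hγ : 0 ≤ γ) (hσ : σ = c * Real.sqrt n)
    (h8 : 8 * γ * c ≤ 1)
    (hop : opNorm Δ ≤ γ * Real.sqrt n)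
    (hAdef : A = vecMulVec z z + σ • Δ)
    (Q : Matrix (Fin n) (Fin 2) ℝ) (hrows : ∀ i, (Q i 0) ^ 2 + (Q i 1) ^ 2 = 1)
    (hfo : (ddiag (A * Q * Qᵀ) - A) * Q = 0)
    (hso : (ddiag (A * Q * Qᵀ) - A.hadamard (Q * Qᵀ)).PosSemidef) :
    1 - 8 * γ * c ≤ Real.sqrt (∑ j, (∑ i, Q i j * z i) ^ 2) / n := by
  have hz2 (i : Fin n) : z i ^ 2 = 1 := by rcases hz i with h | h <;> simp [h]
  have hQ (i : Fin n) : (Q * Qᵀ) i i = 1 := by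
    simpa [mul_apply, Fin.sum_univ_two, sq] using hrows i
  have hσ0 : 0 ≤ σ := by rw [hσ]; positivity
  have hK : σ * opNorm Δ ≤ γ * c * n :=
    calc σ * opNorm Δ ≤ σ * (γ * √n) := mul_le_mul_of_nonneg_left hop hσ0
      _ = γ * c * n := by rw [hσ, mul_mul_mul_comm, Real.mul_self_sqrt n.cast_nonneg]; ring
  have hK0 : 0 ≤ σ * opNorm Δ := mul_nonneg hσ0 (norm_nonneg _)
  have hab : Qᵀ 0 ⬝ᵥ Qᵀ 0 + Qᵀ 1 ⬝ᵥ Qᵀ 1 = n := by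
    simpa [Fin.sum_univ_two] using sum_col_dotProduct_col_self_eq_card hQ
  have hfirst := cross_dotProduct_le_of_firstOrder hz2 hAdef hrows hfo
  have hsecond := sum_sq_dotProduct_sub_le_of_secondOrder hz2 hσ0 hAdef hQ hfo hso
  simp only [Fin.sum_univ_two, dotProduct_comm (Qᵀ 1) (Qᵀ 0)] at hsecond
  have key := mul_one_sub_le_sqrt_of_gram_bounds (t := γ * c) (by positivity) (by linarith)
    (Nat.cast_pos.2 hn) hab (dotProduct_sq_le_dotProduct_self_mul_dotProduct_self _ _)
    (hfirst.trans (by rw [hab]; nlinarith [pow_le_pow_left₀ hK0 hK 2]))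
    (by nlinarith [mul_le_mul_of_nonneg_right hK n.cast_nonneg])
  change _ ≤ √(∑ j, (Qᵀ j ⬝ᵥ z) ^ 2) / n
  rw [Fin.sum_univ_two, le_div_iff₀ (by positivity)]
  linarith

/-- Strong correlation of second-order critical points with the planted vector:
‖Qᵀz‖₂/n ≥ 1 − 8γc. -/
theorem stmt17 {n : ℕ} (hn : 0 < n) (z : Fin n → ℝ) (hz : ∀ i, z i = 1 ∨ z i = -1)
    (Δ A : Matrix (Fin n) (Fin n) ℝ) (hΔ : Δ.IsSymm)
    (σ c γ : ℝ) (hc : 0 ≤ c) (hγ : 0 ≤ γ) (hσ : σ = c * Real.sqrt n)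
    (h8 : 8 * γ * c ≤ 1)
    (hSDP : ∀ X : Matrix (Fin n) (Fin n) ℝ, X.PosSemidef → (∀ i, X i i = 1) →
      minner Δ X / n ≤ γ * Real.sqrt n)
    (hop : opNorm Δ ≤ γ * Real.sqrt n)
    (hAdef : A = vecMulVec z z + σ • Δ)
    (Q : Matrix (Fin n) (Fin 2) ℝ) (hrows : ∀ i, (Q i 0) ^ 2 + (Q i 1) ^ 2 = 1)
    (hfo : (ddiag (A * Q * Qᵀ) - A) * Q = 0)
    (hso : (ddiag (A * Q * Qᵀ) - A.hadamard (Q * Qᵀ)).PosSemidef) :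
    1 - 8 * γ * c ≤ Real.sqrt (∑ j, (∑ i, Q i j * z i) ^ 2) / n :=
  stmt17_general hn z hz Δ A σ c γ hc hγ hσ h8 hop hAdef Q hrows hfo hso
end

section
/- Let x, y ∈ ℝⁿ with ⟨x,y⟩ = 0 and Δ symmetric with ‖Δ‖ ≤ γ√n, ‖x‖² + ‖y‖² = n, σ ≥ 0. If ⟨𝟙,x⟩y − ⟨𝟙,y⟩x = σ(Δy)∘x − σ(Δx)∘y, then ⟨𝟙,x⟩²‖y‖² + ⟨𝟙,y⟩²‖x‖² ≤ σ²(2γn)²·(n/n) = 4σ²γ²n·n, i.e., ⟨𝟙,x⟩²‖y‖² + ⟨𝟙,y⟩²‖x‖² ≤ σ²(‖Δy‖₂ + ‖Δx‖₂)² ≤ 4σ²γ²n². -/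
/-!
Squaring the first-order identity and using `⟨x, y⟩ = 0`, the left side is
`‖⟨𝟙,x⟩ y - ⟨𝟙,y⟩ x‖² = σ² ‖(Δy)∘x - (Δx)∘y‖²`. Since every row `(xᵢ, yᵢ)` is a unit vector,
Cauchy–Schwarz in `ℝ²` bounds the `i`-th entry by `(Δy)ᵢ² + (Δx)ᵢ²`, so the whole is at most
`σ² ‖Δ‖² (‖x‖² + ‖y‖²) = σ² ‖Δ‖² n ≤ σ² γ² n²`.
-/

open Matrix BigOperators

theorem sum_mulVec_sq_le {n : ℕ} (M : Matrix (Fin n) (Fin n) ℝ) (v : Fin n → ℝ) :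
    ∑ i, (M *ᵥ v) i ^ 2 ≤ opNorm M ^ 2 * ∑ i, v i ^ 2 := by
  have h := pow_le_pow_left₀ (norm_nonneg _)
    ((Matrix.toEuclideanLin M).toContinuousLinearMap.le_opNorm (WithLp.toLp 2 v)) 2
  rwa [mul_pow, EuclideanSpace.real_norm_sq_eq, EuclideanSpace.real_norm_sq_eq] at h

theorem opNorm_sq_le_of_le {n : ℕ} {M : Matrix (Fin n) (Fin n) ℝ} {γ : ℝ}
    (hop : opNorm M ≤ γ * Real.sqrt n) : opNorm M ^ 2 ≤ γ ^ 2 * n := by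
  have h := pow_le_pow_left₀ (norm_nonneg _) hop 2
  rwa [mul_pow, Real.sq_sqrt n.cast_nonneg] at h

section UnitRows

variable {ι : Type*} [Fintype ι]

theorem sum_sq_mul_sub_mul_of_sum_mul_eq_zero (x y : ι → ℝ) (hxy : ∑ i, x i * y i = 0)
    (a b : ℝ) :
    ∑ i, (a * y i - b * x i) ^ 2 = a ^ 2 * ∑ i, y i ^ 2 + b ^ 2 * ∑ i, x i ^ 2 := by
  have h : ∀ i, (a * y i - b * x i) ^ 2
      = a ^ 2 * y i ^ 2 + b ^ 2 * x i ^ 2 - 2 * a * b * (x i * y i) := fun i => by ring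
  simp only [h, Finset.sum_sub_distrib, Finset.sum_add_distrib, ← Finset.mul_sum, hxy]
  ring

theorem sum_sq_mul_sub_mul_le_of_unit_rows (x y u w : ι → ℝ)
    (hrows : ∀ i, x i ^ 2 + y i ^ 2 = 1) :
    ∑ i, (u i * x i - w i * y i) ^ 2 ≤ ∑ i, u i ^ 2 + ∑ i, w i ^ 2 := by
  rw [← Finset.sum_add_distrib]
  refine Finset.sum_le_sum fun i _ => ?_
  -- Lagrange: (u² + w²)(x² + y²) = (ux - wy)² + (uy + wx)²
  nlinarith [hrows i, sq_nonneg (u i * y i + w i * x i)]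

theorem sum_sq_add_sum_sq_eq_card_of_unit_rows (x y : ι → ℝ)
    (hrows : ∀ i, x i ^ 2 + y i ^ 2 = 1) :
    ∑ i, x i ^ 2 + ∑ i, y i ^ 2 = Fintype.card ι := by
  simp [← Finset.sum_add_distrib, hrows]

end UnitRows

theorem stmt18_general {n : ℕ} (x y : Fin n → ℝ) (hxy : ∑ i, x i * y i = 0)
    (hrows : ∀ i, (x i) ^ 2 + (y i) ^ 2 = 1)
    (Δ : Matrix (Fin n) (Fin n) ℝ)
    (γ σ : ℝ) (hop : opNorm Δ ≤ γ * Real.sqrt n)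
    (hfo : ∀ i, (∑ k, x k) * y i - (∑ k, y k) * x i
      = σ * (Δ.mulVec y i * x i) - σ * (Δ.mulVec x i * y i)) :
    (∑ k, x k) ^ 2 * (∑ i, (y i) ^ 2) + (∑ k, y k) ^ 2 * (∑ i, (x i) ^ 2)
      ≤ 4 * σ ^ 2 * γ ^ 2 * (n : ℝ) ^ 2 := by
  have hfo_sq : ∀ i, ((∑ k, x k) * y i - (∑ k, y k) * x i) ^ 2
      = σ ^ 2 * ((Δ *ᵥ y) i * x i - (Δ *ᵥ x) i * y i) ^ 2 := fun i => by
    rw [hfo]; ring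
  have hnorm := sum_sq_add_sum_sq_eq_card_of_unit_rows x y hrows
  rw [Fintype.card_fin] at hnorm
  calc (∑ k, x k) ^ 2 * (∑ i, (y i) ^ 2) + (∑ k, y k) ^ 2 * (∑ i, (x i) ^ 2)
      = σ ^ 2 * ∑ i, ((Δ *ᵥ y) i * x i - (Δ *ᵥ x) i * y i) ^ 2 := by
        rw [← sum_sq_mul_sub_mul_of_sum_mul_eq_zero x y hxy, Finset.mul_sum]
        exact Finset.sum_congr rfl fun i _ => hfo_sq i
    _ ≤ σ ^ 2 * (∑ i, (Δ *ᵥ y) i ^ 2 + ∑ i, (Δ *ᵥ x) i ^ 2) := by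
        gcongr; exact sum_sq_mul_sub_mul_le_of_unit_rows x y _ _ hrows
    _ ≤ σ ^ 2 * (opNorm Δ ^ 2 * ∑ i, y i ^ 2 + opNorm Δ ^ 2 * ∑ i, x i ^ 2) := by
        gcongr <;> exact sum_mulVec_sq_le Δ _
    _ = σ ^ 2 * opNorm Δ ^ 2 * n := by rw [← hnorm]; ring
    _ ≤ σ ^ 2 * (γ ^ 2 * n) * n := by gcongr; exact opNorm_sq_le_of_le hop
    _ ≤ 4 * σ ^ 2 * γ ^ 2 * (n : ℝ) ^ 2 := by nlinarith [sq_nonneg (σ * γ * n)]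

/-- From the first-order identity, bound ⟨𝟙,x⟩²‖y‖² + ⟨𝟙,y⟩²‖x‖² ≤ 4σ²γ²n². -/
theorem stmt18 {n : ℕ} (x y : Fin n → ℝ) (hxy : ∑ i, x i * y i = 0)
    (hrows : ∀ i, (x i) ^ 2 + (y i) ^ 2 = 1)
    (Δ : Matrix (Fin n) (Fin n) ℝ) (hΔ : Δ.IsSymm)
    (γ σ : ℝ) (hσ : 0 ≤ σ) (hγ : 0 ≤ γ) (hop : opNorm Δ ≤ γ * Real.sqrt n)
    (hfo : ∀ i, (∑ k, x k) * y i - (∑ k, y k) * x i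
      = σ * (Δ.mulVec y i * x i) - σ * (Δ.mulVec x i * y i)) :
    (∑ k, x k) ^ 2 * (∑ i, (y i) ^ 2) + (∑ k, y k) ^ 2 * (∑ i, (x i) ^ 2)
      ≤ 4 * σ ^ 2 * γ ^ 2 * (n : ℝ) ^ 2 :=
  stmt18_general x y hxy hrows Δ γ σ hop hfo
end
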